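/- Let (f_j)_{j∈ℕ} be an orthonormal sequence in ℓ₂(ℕ,ℂ) with each f_j ∈ s, and let (N_k)_{k∈ℕ} be a family of finite nonempty pairwise disjoint subsets of ℕ. Then the following are equivalent: (a) there exist a strictly increasing sequence (n_k)_{k∈ℕ} of natural numbers and a bijective ℂ-algebra homomorphism from the Köthe algebra λ^∞(max_{j∈N_k}|f_j|_q) := {ξ ∈ ℂ^ℕ : sup_k |ξ_k| · max_{j∈N_k}|f_j|_q < ∞ for all q ∈ ℕ₀} onto λ^∞(n_k^q) := {ξ ∈ ℂ^ℕ : sup_k |ξ_k| n_k^q < ∞ for all q ∈ ℕ₀} (both with pointwise operations); (b) there exists p ∈ ℕ₀ such that for every q ∈ ℕ₀ there exist r ∈ ℕ₀ and C > 0 with max_{j∈N_k}|f_j|_q ≤ C · (max_{j∈N_k}|f_j|_p)^r for all k ∈ ℕ. -/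

import Mathlib

noncomputable section

/-- Membership in the space `s` of rapidly decreasing sequences (the paper's index
`j ∈ {1,2,...}` corresponds to `j+1` here). -/
def inS (ξ : ℕ → ℂ) : Prop :=
  ∀ q : ℕ, Summable fun j : ℕ => ‖ξ j‖ ^ 2 * ((j : ℝ) + 1) ^ (2 * q)

/-- The `q`-th norm `|ξ|_q` on `s`. -/
def sNorm (q : ℕ) (ξ : ℕ → ℂ) : ℝ :=
  Real.sqrt (∑' j : ℕ, ‖ξ j‖ ^ 2 * ((j : ℝ) + 1) ^ (2 * q))

/-!
Write `A q k = max_{j ∈ N_k} |f_j|_q` and `λ^∞(a) = {ξ | ∀ q, sup_k |ξ_k| a q k < ∞}`.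
Two such spaces with increasing positive weights coincide iff each weight system is dominated
by the other (a diagonal test vector shows necessity). A multiplicative bijection between
`λ^∞(A)` and `λ^∞(n^q)` must permute the unit vectors, the minimal idempotents, so it is a
permutation `σ` of coordinates and `λ^∞(A) = λ^∞(n_{σ k}^q)`; domination in both directions
gives (b) with `p` chosen so that `n_{σ k} ≲ A p k`.

Conversely, Cauchy–Schwarz gives `|f|_q² ≤ |f|_0 |f|_{2q}` with `|f|_0 = 1`, so
`(A p)^s ≤ A (2^s p)`, and with (b) the weights `A` are equivalent to `(A p)^q`. By Bessel's
inequality and a tail estimate at most `6t` of the `k` have `A 1 k ≤ t`, so ranking the `k` by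
`A p k` yields a strictly increasing `n` with `A p k ≤ n_{σ k} ≤ 8 A p k`, and `ξ ↦ ξ ∘ σ⁻¹` is
the isomorphism.
-/

open Function

/-- The Köthe echelon space `λ^∞(a)` of the weight system `a q k`. -/
def kotheEchelon {ι : Type*} (a : ℕ → ι → ℝ) : Set (ι → ℂ) :=
  {ξ | ∀ q, ∃ C, ∀ k, ‖ξ k‖ * a q k ≤ C}

section Kothe

variable {ι : Type*} {a b : ℕ → ι → ℝ} {m : ι → ℝ}

theorem zero_mem_kotheEchelon (a : ℕ → ι → ℝ) : (0 : ι → ℂ) ∈ kotheEchelon a :=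
  fun _ => ⟨0, fun _ => by simp⟩

theorem single_mem_kotheEchelon [DecidableEq ι] (a : ℕ → ι → ℝ) (i : ι) :
    Pi.single i 1 ∈ kotheEchelon a := by
  refine fun q => ⟨max (a q i) 0, fun k => ?_⟩
  rcases eq_or_ne k i with rfl | hk
  · simp
  · simp [hk]

theorem mem_kotheEchelon_comp_symm_iff (σ : ι ≃ ι) (ξ : ι → ℂ) :
    ξ ∘ σ.symm ∈ kotheEchelon b ↔ ξ ∈ kotheEchelon fun q k => b q (σ k) :=
  forall_congr' fun _ => exists_congr fun _ => by
    rw [← σ.forall_congr_right]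
    simp only [comp_apply, Equiv.symm_apply_apply]

theorem kotheEchelon_subset_of_le (h : ∀ q, ∃ r C, 0 ≤ C ∧ ∀ k, b q k ≤ C * a r k) :
    kotheEchelon a ⊆ kotheEchelon b := by
  intro ξ hξ q
  obtain ⟨r, C, hC, hba⟩ := h q
  obtain ⟨D, hD⟩ := hξ r
  refine ⟨C * D, fun k => ?_⟩
  calc ‖ξ k‖ * b q k ≤ ‖ξ k‖ * (C * a r k) := by gcongr; exact hba k
    _ = C * (‖ξ k‖ * a r k) := by ring
    _ ≤ C * D := by gcongr; exact hD k

theorem exists_le_mul_of_kotheEchelon_subset (ha : ∀ q k, 0 < a q k)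
    (ha_mono : ∀ k, Monotone (a · k)) (h : kotheEchelon a ⊆ kotheEchelon b) (q : ℕ) :
    ∃ r C, 0 < C ∧ ∀ k, b q k ≤ C * a r k := by
  classical
  by_contra! hcon
  choose k hk using fun r : ℕ => hcon r (r + 1) r.cast_add_one_pos
  -- Test vector: `(a r (k r))⁻¹` at `k r`, for the least such `r`; it lies in `λ^∞(a)`,
  -- yet `‖ξ (k r)‖ * b q (k r) > r + 1`.
  let ξ : ι → ℂ := fun i => if hi : ∃ r, k r = i then ((a (Nat.find hi) i)⁻¹ : ℝ) else 0
  have hξ : ∀ i (hi : ∃ r, k r = i), ‖ξ i‖ = (a (Nat.find hi) i)⁻¹ := fun i hi => by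
    simp [ξ, hi, (ha _ _).le]
  have hξ_mem : ξ ∈ kotheEchelon a := by
    intro q'
    refine ⟨1 + ∑ r ∈ Finset.range q', ‖ξ (k r)‖ * a q' (k r), fun i => ?_⟩
    have hsum : 0 ≤ ∑ r ∈ Finset.range q', ‖ξ (k r)‖ * a q' (k r) :=
      Finset.sum_nonneg fun r _ => mul_nonneg (norm_nonneg _) (ha _ _).le
    by_cases hi : ∃ r, k r = i
    · rcases le_or_gt q' (Nat.find hi) with hle | hlt
      · have : ‖ξ i‖ * a q' i ≤ 1 := by
          rw [hξ i hi, inv_mul_le_one₀ (ha _ _)]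
          exact ha_mono i hle
        linarith
      · rw [← Nat.find_spec hi]
        linarith [Finset.single_le_sum
          (fun r _ => mul_nonneg (norm_nonneg (ξ (k r))) (ha q' (k r)).le) (Finset.mem_range.2 hlt)]
    · rw [show ξ i = 0 from dif_neg hi, norm_zero, zero_mul]
      linarith
  obtain ⟨C, hC⟩ := h hξ_mem q
  obtain ⟨r, hr⟩ := exists_nat_gt C
  have hb_pos : 0 < b q (k r) := lt_trans (by have := ha r (k r); positivity) (hk r)
  have hξr : (a r (k r))⁻¹ ≤ ‖ξ (k r)‖ := by
    rw [hξ _ ⟨r, rfl⟩]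
    exact inv_anti₀ (ha _ _) (ha_mono _ (Nat.find_min' _ rfl))
  have : (r : ℝ) + 1 < ‖ξ (k r)‖ * b q (k r) :=
    calc (r : ℝ) + 1 < (a r (k r))⁻¹ * b q (k r) := by
          rw [lt_inv_mul_iff₀ (ha _ _)]; linarith [hk r]
      _ ≤ ‖ξ (k r)‖ * b q (k r) := by gcongr
  linarith [hC (k r)]

theorem exists_le_mul_pow_of_kotheEchelon_eq_pow (ha : ∀ q k, 0 < a q k)
    (ha_mono : ∀ k, Monotone (a · k)) (hm : ∀ k, 1 ≤ m k)
    (h : kotheEchelon a = kotheEchelon fun q k => m k ^ q) :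
    ∃ p, ∀ q, ∃ r C, 0 < C ∧ ∀ k, a q k ≤ C * a p k ^ r := by
  obtain ⟨p, C₁, hC₁, hmp⟩ := exists_le_mul_of_kotheEchelon_subset ha ha_mono h.le 1
  refine ⟨p, fun q => ?_⟩
  obtain ⟨r, C₂, hC₂, hqm⟩ := exists_le_mul_of_kotheEchelon_subset
    (fun q k => by have := hm k; positivity) (fun k => pow_right_mono₀ (hm k)) h.ge q
  refine ⟨r, C₂ * C₁ ^ r, by positivity, fun k => ?_⟩
  calc a q k ≤ C₂ * m k ^ r := hqm k
    _ ≤ C₂ * (C₁ * a p k) ^ r := by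
        have := hm k
        gcongr
        simpa using hmp k
    _ = C₂ * C₁ ^ r * a p k ^ r := by ring

theorem kotheEchelon_eq_pow_of_le_of_le {p : ℕ} {c : ℝ} (hc : 0 ≤ c) (ha : ∀ k, 0 ≤ a p k)
    (hm : ∀ k, a p k ≤ m k ∧ m k ≤ c * a p k) (ha_pow : ∀ s, ∃ q, ∀ k, a p k ^ s ≤ a q k)
    (hp : ∀ q, ∃ r C, 0 < C ∧ ∀ k, a q k ≤ C * a p k ^ r) :
    kotheEchelon a = kotheEchelon fun q k => m k ^ q := by
  refine subset_antisymm (kotheEchelon_subset_of_le fun s => ?_)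
    (kotheEchelon_subset_of_le fun q => ?_)
  · obtain ⟨q, hq⟩ := ha_pow s
    refine ⟨q, c ^ s, by positivity, fun k => ?_⟩
    calc m k ^ s ≤ (c * a p k) ^ s := by
          have := ha k
          gcongr
          · linarith [hm k]
          · exact (hm k).2
      _ = c ^ s * a p k ^ s := mul_pow _ _ _
      _ ≤ c ^ s * a q k := by gcongr; exact hq k
  · obtain ⟨r, C, hC, hq⟩ := hp q
    refine ⟨r, C, hC.le, fun k => (hq k).trans ?_⟩
    have := ha k
    gcongr
    exact (hm k).1

end Kothe

section CoordinatePermutation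

variable {ι : Type*}

theorem bijOn_comp_symm_of_mem_iff {α : Type*} {S T : Set (ι → α)} {σ : ι ≃ ι}
    (h : ∀ ξ, ξ ∈ S ↔ ξ ∘ σ.symm ∈ T) : Set.BijOn (· ∘ σ.symm) S T := by
  refine ⟨fun ξ hξ => (h ξ).1 hξ, fun ξ _ η _ hξη => σ.symm.surjective.injective_comp_right hξη,
    fun η hη => ⟨η ∘ σ, (h _).2 ?_, ?_⟩⟩ <;>
  simp [comp_assoc, hη]

variable {K : Type*} [Field K] [DecidableEq ι]

theorem eq_single_of_mul_single_eq_smul {g : ι → K} (hg : g ≠ 0) (hgg : g * g = g)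
    (h : ∀ m, ∃ c : K, g * Pi.single m 1 = c • g) : ∃ m, g = Pi.single m 1 := by
  obtain ⟨m, hm⟩ := Function.ne_iff.1 hg
  obtain ⟨c, hc⟩ := h m
  have hc_one : c = 1 := by
    have := congrFun hc m
    simp only [Pi.mul_apply, Pi.single_eq_same, mul_one, Pi.smul_apply, smul_eq_mul] at this
    exact (mul_eq_right₀ hm).1 this.symm
  have hgm : g m = 1 := (mul_eq_right₀ hm).1 (congrFun hgg m)
  refine ⟨m, funext fun i => ?_⟩
  rcases eq_or_ne i m with rfl | hi
  · simpa using hgm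
  · simpa [hi, hc_one, eq_comm] using congrFun hc i

variable {S T : Set (ι → K)} {Φ : (ι → K) → ι → K}

-- The unit vectors are the minimal idempotents, so a multiplicative bijection permutes them.
theorem exists_equiv_eq_comp_symm_of_bijOn (hS₀ : 0 ∈ S) (hS : ∀ i, Pi.single i 1 ∈ S)
    (hT : ∀ i, Pi.single i 1 ∈ T) (hΦ : Set.BijOn Φ S T)
    (hmul : ∀ ξ ∈ S, ∀ η ∈ S, Φ (ξ * η) = Φ ξ * Φ η)
    (hsmul : ∀ c : K, ∀ ξ ∈ S, Φ (c • ξ) = c • Φ ξ) :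
    ∃ σ : ι ≃ ι, ∀ ξ ∈ S, Φ ξ = ξ ∘ σ.symm := by
  have hΦ₀ : Φ 0 = 0 := by simpa using hsmul 0 0 hS₀
  have hmul_single : ∀ ξ ∈ S, ∀ i,
      Φ ξ * Φ (Pi.single i 1) = ξ i • Φ (Pi.single i 1) := fun ξ hξ i => by
    rw [← hmul ξ hξ _ (hS i), ← hsmul _ _ (hS i), ← Pi.single_mul_right, mul_one,
      ← Pi.single_smul, smul_eq_mul, mul_one]
  have hsingle : ∀ i, ∃ m, Φ (Pi.single i 1) = Pi.single m 1 := by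
    intro i
    refine eq_single_of_mul_single_eq_smul (fun h => ?_) ?_ fun m => ?_
    · have := congrFun (hΦ.injOn (hS i) hS₀ (h.trans hΦ₀.symm)) i
      simp at this
    · rw [← hmul _ (hS i) _ (hS i), ← Pi.single_mul, mul_one]
    · obtain ⟨ξ, hξ, hξm⟩ := hΦ.surjOn (hT m)
      exact ⟨ξ i, by rw [← hξm, mul_comm, hmul_single ξ hξ i]⟩
  choose τ hτ using hsingle
  have hcoord : ∀ ξ ∈ S, ∀ i, Φ ξ (τ i) = ξ i := fun ξ hξ i => by
    simpa [hτ] using congrFun (hmul_single ξ hξ i) (τ i)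
  have hτ_inj : Injective τ := fun i j hij => by
    have := congrFun (hΦ.injOn (hS i) (hS j) (by rw [hτ, hτ, hij])) i
    by_contra hne
    simp [hne] at this
  have hτ_surj : Surjective τ := fun m => by
    obtain ⟨ζ, hζ, hζm⟩ := hΦ.surjOn (hT m)
    obtain ⟨i, hi⟩ : ∃ i, ζ i ≠ 0 :=
      Function.ne_iff.1 fun h => by simpa [show ζ = 0 from h, hΦ₀] using congrFun hζm m
    refine ⟨i, by_contra fun h => hi ?_⟩
    rw [← hcoord ζ hζ i, hζm, Pi.single_apply, if_neg h]
  have hτ : Bijective τ := ⟨hτ_inj, hτ_surj⟩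
  refine ⟨Equiv.ofBijective τ hτ, fun ξ hξ => funext fun m => ?_⟩
  obtain ⟨i, rfl⟩ := hτ.2 m
  rw [hcoord ξ hξ i, comp_apply, Equiv.ofBijective_symm_apply_apply]

theorem exists_equiv_mem_iff_of_bijOn (hS₀ : 0 ∈ S) (hS : ∀ i, Pi.single i 1 ∈ S)
    (hT : ∀ i, Pi.single i 1 ∈ T) (hΦ : Set.BijOn Φ S T)
    (hmul : ∀ ξ ∈ S, ∀ η ∈ S, Φ (ξ * η) = Φ ξ * Φ η)
    (hsmul : ∀ c : K, ∀ ξ ∈ S, Φ (c • ξ) = c • Φ ξ) :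
    ∃ σ : ι ≃ ι, ∀ ξ, ξ ∈ S ↔ ξ ∘ σ.symm ∈ T := by
  obtain ⟨σ, hσ⟩ := exists_equiv_eq_comp_symm_of_bijOn hS₀ hS hT hΦ hmul hsmul
  refine ⟨σ, fun ξ => ⟨fun hξ => hσ ξ hξ ▸ hΦ.mapsTo hξ, fun hξ => ?_⟩⟩
  obtain ⟨ζ, hζ, hζξ⟩ := hΦ.surjOn hξ
  rwa [← σ.symm.surjective.injective_comp_right ((hσ ζ hζ).symm.trans hζξ)]

end CoordinatePermutation

section Rearrangement

theorem exists_equiv_strictMono_comp_eq {v : ℕ → ℕ} (hv : Injective v) :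
    ∃ σ : ℕ ≃ ℕ, ∃ n : ℕ → ℕ, StrictMono n ∧ ∀ k, n (σ k) = v k := by
  classical
  have : Infinite (Set.range v) := (Set.infinite_range_of_injective hv).to_subtype
  let e := Nat.Subtype.orderIsoOfNat (Set.range v)
  refine ⟨(Equiv.ofInjective v hv).trans e.symm.toEquiv, fun i => e i,
    (Subtype.strictMono_coe _).comp e.strictMono, fun k => ?_⟩
  simp

theorem setOf_le_finite_of_card_le {a : ℕ → ℝ} {E : ℝ}
    (hcard : ∀ (s : Finset ℕ) (t : ℝ), 1 ≤ t → (∀ k ∈ s, a k ≤ t) → (s.card : ℝ) ≤ E * t)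
    (t : ℝ) : {k | a k ≤ t}.Finite := by
  by_contra hinf
  obtain ⟨s, hs, hs_card⟩ := Set.Infinite.exists_subset_card_eq hinf (⌈E * max t 1⌉₊ + 1)
  have := hcard s (max t 1) (le_max_right _ _) fun k hk => (hs hk).trans (le_max_left _ _)
  rw [hs_card] at this
  push_cast at this
  linarith [Nat.le_ceil (E * max t 1)]

-- Ranking `ℕ` by `(a k, k)` lexicographically, `⌈a k⌉ + rank k` is injective, and
-- the rank of `k` is at most the number of `l` with `a l ≤ a k`.
theorem exists_equiv_strictMono_le_le {a : ℕ → ℝ} {E : ℝ} (ha : ∀ k, 1 ≤ a k)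
    (hcard : ∀ (s : Finset ℕ) (t : ℝ), 1 ≤ t → (∀ k ∈ s, a k ≤ t) → (s.card : ℝ) ≤ E * t) :
    ∃ σ : ℕ ≃ ℕ, ∃ n : ℕ → ℕ, StrictMono n ∧
      ∀ k, a k ≤ n (σ k) ∧ (n (σ k) : ℝ) ≤ (E + 2) * a k := by
  have hfin := setOf_le_finite_of_card_le hcard
  let key : ℕ → ℝ ×ₗ ℕ := fun k => toLex (a k, k)
  have hkey : Injective key := fun k l h => congrArg (fun x => (ofLex x).2) h
  let below : ℕ → Set ℕ := fun k => key ⁻¹' Set.Iio (key k)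
  have hbelow : ∀ k, below k ⊆ {l | a l ≤ a k} := fun k l hl =>
    (Prod.Lex.toLex_lt_toLex.1 hl).elim le_of_lt fun h => h.1.le
  have hlt : ∀ k l, key k < key l → ⌈a k⌉₊ + (below k).ncard < ⌈a l⌉₊ + (below l).ncard := by
    intro k l hkl
    have hceil : ⌈a k⌉₊ ≤ ⌈a l⌉₊ :=
      Nat.ceil_mono ((Prod.Lex.toLex_lt_toLex.1 hkl).elim le_of_lt fun h => h.1.le)
    have hsub : below k ⊂ below l :=
      (Set.ssubset_iff_of_subset fun x (hx : key x < key k) => hx.trans hkl).2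
        ⟨k, hkl, fun h : key k < key k => h.false⟩
    have := Set.ncard_lt_ncard hsub ((hfin (a l)).subset (hbelow l))
    omega
  obtain ⟨σ, n, hn, hnv⟩ := exists_equiv_strictMono_comp_eq (v := fun k => ⌈a k⌉₊ + (below k).ncard)
    fun k l h => by
      by_contra hkl
      rcases lt_or_gt_of_ne (hkey.ne hkl) with h' | h'
      · exact (hlt k l h').ne h
      · exact (hlt l k h').ne h.symm
  refine ⟨σ, n, hn, fun k => ?_⟩
  have hrank : ((below k).ncard : ℝ) ≤ E * a k := by
    calc ((below k).ncard : ℝ) ≤ (hfin (a k)).toFinset.card := by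
          rw [← Set.ncard_coe_finset, Set.Finite.coe_toFinset]
          exact_mod_cast Set.ncard_le_ncard (hbelow k) (hfin _)
      _ ≤ E * a k := hcard _ _ (ha k) fun l hl => by simpa using hl
  rw [hnv]
  push_cast
  constructor
  · linarith [Nat.le_ceil (a k), ((below k).ncard).cast_nonneg (α := ℝ)]
  · linarith [Nat.ceil_lt_add_one (zero_le_one.trans (ha k)), ha k]

end Rearrangement

section SNorm

variable {ξ : ℕ → ℂ}

theorem sNorm_sq (q : ℕ) (ξ : ℕ → ℂ) :
    sNorm q ξ ^ 2 = ∑' j : ℕ, ‖ξ j‖ ^ 2 * ((j : ℝ) + 1) ^ (2 * q) :=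
  Real.sq_sqrt (tsum_nonneg fun _ => by positivity)

theorem sNorm_nonneg (q : ℕ) (ξ : ℕ → ℂ) : 0 ≤ sNorm q ξ :=
  Real.sqrt_nonneg _

theorem sNorm_mono (hξ : inS ξ) : Monotone fun q => sNorm q ξ := fun q q' h => by
  refine Real.sqrt_le_sqrt ((hξ q).tsum_le_tsum (fun j => ?_) (hξ q'))
  gcongr
  linarith [j.cast_nonneg (α := ℝ)]

theorem sNorm_zero_eq_one (h : ∑' m, starRingEnd ℂ (ξ m) * ξ m = 1) : sNorm 0 ξ = 1 := by
  have : ∑' m, ‖ξ m‖ ^ 2 = 1 := by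
    simp only [Complex.conj_mul'] at h
    exact_mod_cast h
  simp [sNorm, this]

theorem sNorm_sq_le_mul (hξ : inS ξ) (q : ℕ) : sNorm q ξ ^ 2 ≤ sNorm 0 ξ * sNorm (2 * q) ξ := by
  have hw : ∀ j : ℕ, (‖ξ j‖ * ((j : ℝ) + 1) ^ (2 * q)) ^ 2 =
      ‖ξ j‖ ^ 2 * ((j : ℝ) + 1) ^ (2 * (2 * q)) := fun j => by ring
  have hCS := Real.inner_le_Lp_mul_Lq_tsum_of_nonneg Real.HolderConjugate.two_two
    (f := fun j => ‖ξ j‖) (g := fun j => ‖ξ j‖ * ((j : ℝ) + 1) ^ (2 * q))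
    (fun _ => norm_nonneg _) (fun _ => by positivity) (by simpa using hξ 0)
    (by simpa [hw] using hξ (2 * q))
  simp only [Real.rpow_two, hw, ← Real.sqrt_eq_rpow] at hCS
  convert hCS using 1
  · rw [sNorm_sq]
    exact tsum_congr fun j => by ring
  · simp [sNorm]

theorem sNorm_pow_two_pow_le (hξ : inS ξ) (h₀ : sNorm 0 ξ = 1) (t q : ℕ) :
    sNorm q ξ ^ 2 ^ t ≤ sNorm (2 ^ t * q) ξ := by
  induction t generalizing q with
  | zero => simp
  | succ t ih =>
    calc sNorm q ξ ^ 2 ^ (t + 1) = (sNorm q ξ ^ 2 ^ t) ^ 2 := by ring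
      _ ≤ sNorm (2 ^ t * q) ξ ^ 2 := pow_le_pow_left₀ (pow_nonneg (sNorm_nonneg _ _) _) (ih q) 2
      _ ≤ sNorm (2 ^ (t + 1) * q) ξ := by
        simpa [h₀, pow_succ, mul_assoc, mul_left_comm] using sNorm_sq_le_mul hξ (2 ^ t * q)

theorem pow_sNorm_le (hξ : inS ξ) (h₀ : sNorm 0 ξ = 1) (s q : ℕ) :
    sNorm q ξ ^ s ≤ sNorm (2 ^ s * q) ξ :=
  (pow_le_pow_right₀ (h₀.symm.trans_le (sNorm_mono hξ q.zero_le)) Nat.lt_two_pow_self.le).trans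
    (sNorm_pow_two_pow_le hξ h₀ s q)

theorem sNorm_zero_sq_le (hξ : inS ξ) (M : ℕ) :
    sNorm 0 ξ ^ 2 ≤ ∑ m ∈ Finset.range M, ‖ξ m‖ ^ 2 + sNorm 1 ξ ^ 2 / ((M : ℝ) + 1) ^ 2 := by
  have hhead : ∑' m, (if m < M then ‖ξ m‖ ^ 2 else 0) = ∑ m ∈ Finset.range M, ‖ξ m‖ ^ 2 := by
    rw [tsum_eq_sum (s := Finset.range M) fun m hm => if_neg (by simpa using hm)]
    exact Finset.sum_congr rfl fun m hm => if_pos (Finset.mem_range.1 hm)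
  rw [sNorm_sq, sNorm_sq, ← hhead, ← tsum_div_const]
  have hsum : Summable fun m => if m < M then ‖ξ m‖ ^ 2 else 0 :=
    summable_of_hasFiniteSupport ((Set.finite_lt_nat M).subset fun m hm => by
      by_contra h
      exact hm (if_neg h))
  rw [← (hsum.tsum_add ((hξ 1).div_const _))]
  refine (hξ 0).tsum_le_tsum (fun m => ?_) (hsum.add ((hξ 1).div_const _))
  have hM : (0 : ℝ) < ((M : ℝ) + 1) ^ 2 := by positivity
  split_ifs with hm
  · have : 0 ≤ ‖ξ m‖ ^ 2 * ((m : ℝ) + 1) ^ (2 * 1) / ((M : ℝ) + 1) ^ 2 := by positivity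
    simp only [mul_zero, pow_zero, mul_one]
    linarith
  · rw [zero_add, le_div_iff₀ hM, mul_zero, pow_zero, mul_one]
    gcongr
    exact_mod_cast not_lt.1 hm

end SNorm

section Orthonormal

variable {f : ℕ → ℕ → ℂ}
  (hon : ∀ i j : ℕ, (∑' m : ℕ, (starRingEnd ℂ) (f i m) * f j m) = if i = j then 1 else 0)
include hon

theorem sum_norm_sq_apply_le_one (hf : ∀ j, Summable fun m => ‖f j m‖ ^ 2) (J : Finset ℕ)
    (m : ℕ) : ∑ j ∈ J, ‖f j m‖ ^ 2 ≤ 1 := by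
  let v : ℕ → lp (fun _ : ℕ => ℂ) 2 := fun j => ⟨f j, memℓp_gen (by simpa using hf j)⟩
  have hv : Orthonormal ℂ v := orthonormal_iff_ite.2 fun i j => by
    simpa [v, lp.inner_eq_tsum, mul_comm] using hon i j
  simpa [norm_inner_symm, lp.inner_single_left, lp.norm_single, v] using
    hv.sum_inner_products_le (lp.single 2 m (1 : ℂ)) (s := J)

theorem card_le_of_sNorm_le (hfs : ∀ j, inS (f j)) {J : Finset ℕ} {t : ℝ} (ht : 1 ≤ t)
    (hJ : ∀ j ∈ J, sNorm 1 (f j) ≤ t) : (J.card : ℝ) ≤ 6 * t := by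
  -- Each `f j` with `|f j|_1 ≤ t` has half its mass on `[0, 2t]`, where Bessel caps the total mass.
  let M := ⌈2 * t⌉₊
  have hhead : ∀ j ∈ J, 1 / 2 ≤ ∑ m ∈ Finset.range M, ‖f j m‖ ^ 2 := by
    intro j hj
    have h := sNorm_zero_sq_le (hfs j) M
    rw [sNorm_zero_eq_one (by simpa using hon j j)] at h
    have htail : sNorm 1 (f j) ^ 2 / ((M : ℝ) + 1) ^ 2 ≤ 1 / 2 := by
      have hM : 2 * t ≤ M := Nat.le_ceil _
      have h1 : sNorm 1 (f j) ^ 2 ≤ t ^ 2 := pow_le_pow_left₀ (sNorm_nonneg _ _) (hJ j hj) 2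
      have h2 : (2 * t) ^ 2 ≤ ((M : ℝ) + 1) ^ 2 := pow_le_pow_left₀ (by linarith) (by linarith) 2
      rw [div_le_iff₀ (by positivity)]
      nlinarith
    linarith
  have hJM : (J.card : ℝ) / 2 ≤ M :=
    calc (J.card : ℝ) / 2 = ∑ _j ∈ J, (1 / 2 : ℝ) := by
          rw [Finset.sum_const, nsmul_eq_mul]; ring
      _ ≤ ∑ j ∈ J, ∑ m ∈ Finset.range M, ‖f j m‖ ^ 2 := Finset.sum_le_sum hhead
      _ = ∑ m ∈ Finset.range M, ∑ j ∈ J, ‖f j m‖ ^ 2 := Finset.sum_comm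
      _ ≤ ∑ _m ∈ Finset.range M, (1 : ℝ) := Finset.sum_le_sum fun m _ =>
          sum_norm_sq_apply_le_one hon (fun j => by simpa using hfs j 0) J m
      _ = M := by simp
  linarith [Nat.ceil_lt_add_one (by linarith : 0 ≤ 2 * t)]

end Orthonormal

/-- The paper's `max_{j ∈ N_k} |f_j|_q`. -/
def maxSNorm (f : ℕ → ℕ → ℂ) (N : ℕ → Finset ℕ) (hne : ∀ k, (N k).Nonempty) (q k : ℕ) : ℝ :=
  (N k).sup' (hne k) fun j => sNorm q (f j)

section MaxSNorm

variable {f : ℕ → ℕ → ℂ} {N : ℕ → Finset ℕ} {hne : ∀ k, (N k).Nonempty}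

theorem le_maxSNorm {q k j : ℕ} (hj : j ∈ N k) : sNorm q (f j) ≤ maxSNorm f N hne q k :=
  Finset.le_sup' (fun j => sNorm q (f j)) hj

variable (hfs : ∀ j, inS (f j))
include hfs

theorem maxSNorm_mono (k : ℕ) : Monotone (maxSNorm f N hne · k) := fun _ _ h =>
  Finset.sup'_mono_fun fun j _ => sNorm_mono (hfs j) h

theorem one_le_maxSNorm (h₀ : ∀ j, sNorm 0 (f j) = 1) (q k : ℕ) : 1 ≤ maxSNorm f N hne q k := by
  obtain ⟨j, hj⟩ := hne k
  exact (h₀ j).symm.trans_le ((sNorm_mono (hfs j) q.zero_le).trans (le_maxSNorm hj))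

theorem pow_maxSNorm_le (h₀ : ∀ j, sNorm 0 (f j) = 1) (s q k : ℕ) :
    maxSNorm f N hne q k ^ s ≤ maxSNorm f N hne (2 ^ s * q) k := by
  obtain ⟨j, hj, hjmax⟩ := Finset.exists_mem_eq_sup' (hne k) fun j => sNorm q (f j)
  rw [maxSNorm, hjmax]
  exact (pow_sNorm_le (hfs j) (h₀ j) s q).trans (le_maxSNorm hj)

theorem card_le_of_maxSNorm_le
    (hon : ∀ i j : ℕ, (∑' m : ℕ, (starRingEnd ℂ) (f i m) * f j m) = if i = j then 1 else 0)
    (hdisj : ∀ k l, k ≠ l → Disjoint (N k) (N l)) {q : ℕ} (hq : 1 ≤ q) (s : Finset ℕ) (t : ℝ)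
    (ht : 1 ≤ t) (hs : ∀ k ∈ s, maxSNorm f N hne q k ≤ t) : (s.card : ℝ) ≤ 6 * t := by
  choose j hj using fun k => hne k
  have hinj : Set.InjOn j s := fun k _ l _ hkl => by_contra fun hkl' =>
    Finset.disjoint_left.1 (hdisj k l hkl') (hj k) (hkl ▸ hj l)
  rw [← Finset.card_image_of_injOn hinj]
  refine card_le_of_sNorm_le hon hfs ht fun i hi => ?_
  obtain ⟨k, hk, rfl⟩ := Finset.mem_image.1 hi
  exact (sNorm_mono (hfs _) hq).trans ((le_maxSNorm (hj k)).trans (hs k hk))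

end MaxSNorm

/-- Let `(f_j)` be an orthonormal sequence in `ℓ₂` with each `f_j ∈ s` and `(N_k)` finite
nonempty pairwise disjoint subsets of `ℕ`. TFAE: (a) there is a strictly increasing
sequence `(n_k)` of (positive) natural numbers and a bijective `ℂ`-algebra homomorphism
from `λ^∞(max_{j∈N_k}|f_j|_q)` onto `λ^∞(n_k^q)`; (b) there is `p` such that for every `q`
there are `r` and `C > 0` with `max_{j∈N_k}|f_j|_q ≤ C (max_{j∈N_k}|f_j|_p)^r` for all `k`. -/
theorem stmt_13 (f : ℕ → ℕ → ℂ) (hfs : ∀ j, inS (f j))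
    (hon : ∀ i j : ℕ,
      (∑' m : ℕ, (starRingEnd ℂ) (f i m) * f j m) = if i = j then 1 else 0)
    (N : ℕ → Finset ℕ) (hne : ∀ k, (N k).Nonempty)
    (hdisj : ∀ k l, k ≠ l → Disjoint (N k) (N l)) :
    (∃ n : ℕ → ℕ, StrictMono n ∧ (∀ k, 0 < n k) ∧
      ∃ Φ : (ℕ → ℂ) → (ℕ → ℂ),
        Set.BijOn Φ
          {ξ : ℕ → ℂ | ∀ q : ℕ, ∃ C : ℝ, ∀ k : ℕ,
            ‖ξ k‖ * ((N k).sup' (hne k) fun j => sNorm q (f j)) ≤ C}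
          {ξ : ℕ → ℂ | ∀ q : ℕ, ∃ C : ℝ, ∀ k : ℕ, ‖ξ k‖ * (n k : ℝ) ^ q ≤ C} ∧
        (∀ ξ ∈ {ξ : ℕ → ℂ | ∀ q : ℕ, ∃ C : ℝ, ∀ k : ℕ,
            ‖ξ k‖ * ((N k).sup' (hne k) fun j => sNorm q (f j)) ≤ C},
          ∀ η ∈ {ξ : ℕ → ℂ | ∀ q : ℕ, ∃ C : ℝ, ∀ k : ℕ,
            ‖ξ k‖ * ((N k).sup' (hne k) fun j => sNorm q (f j)) ≤ C},
          Φ (ξ + η) = Φ ξ + Φ η ∧ Φ (ξ * η) = Φ ξ * Φ η) ∧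
        (∀ (c : ℂ), ∀ ξ ∈ {ξ : ℕ → ℂ | ∀ q : ℕ, ∃ C : ℝ, ∀ k : ℕ,
            ‖ξ k‖ * ((N k).sup' (hne k) fun j => sNorm q (f j)) ≤ C},
          Φ (c • ξ) = c • Φ ξ)) ↔
    (∃ p : ℕ, ∀ q : ℕ, ∃ r : ℕ, ∃ C : ℝ, 0 < C ∧ ∀ k : ℕ,
      ((N k).sup' (hne k) fun j => sNorm q (f j)) ≤
        C * ((N k).sup' (hne k) fun j => sNorm p (f j)) ^ r) := by
  have h₀ : ∀ j, sNorm 0 (f j) = 1 := fun j => sNorm_zero_eq_one (by simpa using hon j j)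
  have hA_one := one_le_maxSNorm (hne := hne) hfs h₀
  constructor
  · rintro ⟨n, -, hn, Φ, hΦ, hΦ_mul, hΦ_smul⟩
    obtain ⟨σ, hσ⟩ := exists_equiv_mem_iff_of_bijOn (zero_mem_kotheEchelon _)
      (single_mem_kotheEchelon _) (single_mem_kotheEchelon _) hΦ
      (fun ξ hξ η hη => (hΦ_mul ξ hξ η hη).2) hΦ_smul
    exact exists_le_mul_pow_of_kotheEchelon_eq_pow (m := fun k => (n (σ k) : ℝ))
      (fun q k => one_pos.trans_le (hA_one q k)) (maxSNorm_mono hfs)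
      (fun k => Nat.one_le_cast.2 (hn _))
      (Set.ext fun ξ => (hσ ξ).trans (mem_kotheEchelon_comp_symm_iff σ ξ))
  · rintro ⟨p₀, hp₀⟩
    set p := max p₀ 1
    obtain ⟨σ, n, hn, hnA⟩ := exists_equiv_strictMono_le_le (hA_one p)
      (card_le_of_maxSNorm_le hfs hon hdisj (le_max_right p₀ 1))
    have hp : ∀ q, ∃ r C, 0 < C ∧ ∀ k, maxSNorm f N hne q k ≤ C * maxSNorm f N hne p k ^ r :=
      fun q => by
        obtain ⟨r, C, hC, h⟩ := hp₀ q
        refine ⟨r, C, hC, fun k => (h k).trans ?_⟩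
        gcongr
        · exact zero_le_one.trans (hA_one _ _)
        · exact maxSNorm_mono hfs k (le_max_left p₀ 1)
    have hAn := kotheEchelon_eq_pow_of_le_of_le (m := fun k => (n (σ k) : ℝ)) (by norm_num)
      (fun k => zero_le_one.trans (hA_one p k)) hnA
      (fun s => ⟨2 ^ s * p, pow_maxSNorm_le hfs h₀ s p⟩) hp
    refine ⟨n, hn, fun i => ?_, (· ∘ σ.symm), bijOn_comp_symm_of_mem_iff fun ξ => ?_,
      fun _ _ _ _ => ⟨rfl, rfl⟩, fun _ _ _ => rfl⟩
    · obtain ⟨k, rfl⟩ := σ.surjective i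
      exact_mod_cast one_pos.trans_le ((hA_one p k).trans (hnA k).1)
    · exact (Set.ext_iff.1 hAn ξ).trans
        (mem_kotheEchelon_comp_symm_iff (b := fun q k => (n k : ℝ) ^ q) σ ξ).symm

end
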